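/- arXiv:2201.04879 — 2 statements merged into one kernel-verified Lean document; each statement's English description precedes it below -/
import Mathlib

section
/- Let X and Y be finitely generated free abelian groups (lattices), and let E be a finite subset of X × Y. For a group homomorphism f : X → Y, define E_f = { x ∈ X | (x, f(x)) ∈ E }. Then the set of homomorphisms f : X → Y such that E_f spans X ⊗ ℚ over ℚ is finite. -/
/-! A map `f` in the set is determined by the finite set `E ∩ graph f`: two maps with the same
such set agree on `E_f`, hence on all of `X`, because `E_f` spans `X` rationally and `Y` is
torsion-free. -/

open scoped TensorProduct

section

variable {R K : Type*} [CommRing R] [IsDomain R] [Field K] [Algebra R K] [IsFractionRing R K]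

theorem TensorProduct.mk_one_injective_of_isTorsionFree (M : Type*) [AddCommGroup M] [Module R M]
    [Module.IsTorsionFree R M] : Function.Injective (TensorProduct.mk R K M 1) :=
  (IsLocalizedModule.injective_iff_isRegular (nonZeroDivisors R) _).mpr fun c =>
    IsSMulRegular.of_ne_zero (nonZeroDivisors.coe_ne_zero c)

theorem LinearMap.eq_of_eqOn_of_span_one_tmul_eq_top {M N : Type*} [AddCommGroup M] [Module R M]
    [AddCommGroup N] [Module R N] [Module.IsTorsionFree R N] {f g : M →ₗ[R] N} {s : Set M}
    (hs : Submodule.span K ((fun x : M => (1 : K) ⊗ₜ[R] x) '' s) = ⊤) (hfg : Set.EqOn f g s) :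
    f = g := by
  have hbase : f.baseChange K = g.baseChange K := by
    refine LinearMap.ext_on hs ?_
    rintro _ ⟨x, hx, rfl⟩
    simp [hfg hx]
  ext x
  apply TensorProduct.mk_one_injective_of_isTorsionFree (R := R) (K := K) N
  simpa using LinearMap.congr_fun hbase (1 ⊗ₜ x)

end

theorem finiteness_of_spanning_homs_general
    (X Y : Type*) [AddCommGroup X] [Module ℤ X]
    [AddCommGroup Y] [Module ℤ Y] [Module.Free ℤ Y]
    (E : Set (X × Y)) (hE : E.Finite) :
    Set.Finite { f : X →ₗ[ℤ] Y |
      Submodule.span ℚ ((fun x : X => ((1 : ℚ) ⊗ₜ[ℤ] x : ℚ ⊗[ℤ] X)) ''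
        { x : X | (x, f x) ∈ E }) = ⊤ } := by
  refine Set.Finite.of_finite_image (f := fun f => {p ∈ E | p.2 = f p.1})
    (hE.finite_subsets.subset ?_) ?_
  · rintro _ ⟨f, -, rfl⟩
    exact Set.sep_subset E _
  · intro f hf g _ hfg
    refine LinearMap.eq_of_eqOn_of_span_one_tmul_eq_top hf fun x hx => ?_
    exact ((Set.ext_iff.mp hfg (x, f x)).mp ⟨hx, rfl⟩).2

/-- Let `X` and `Y` be lattices (finitely generated free `ℤ`-modules) and
`E ⊆ X × Y` a finite subset.  For a `ℤ`-linear map `f : X → Y` set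
`E_f = { x ∈ X | (x, f x) ∈ E }`.  Then the set of `f` for which the image of `E_f` in
`ℚ ⊗_ℤ X` spans `ℚ ⊗_ℤ X` over `ℚ` is finite. -/
theorem finiteness_of_spanning_homs
    (X Y : Type*) [AddCommGroup X] [Module ℤ X] [Module.Free ℤ X] [Module.Finite ℤ X]
    [AddCommGroup Y] [Module ℤ Y] [Module.Free ℤ Y] [Module.Finite ℤ Y]
    (E : Set (X × Y)) (hE : E.Finite) :
    Set.Finite { f : X →ₗ[ℤ] Y |
      Submodule.span ℚ ((fun x : X => ((1 : ℚ) ⊗ₜ[ℤ] x : ℚ ⊗[ℤ] X)) ''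
        { x : X | (x, f x) ∈ E }) = ⊤ } :=
  finiteness_of_spanning_homs_general X Y E hE
end

section
/- In the same exact sequence setting 0 → A → B = ℝ^I → N → 0 with a_*(η)_i = ⟨χ_i, η⟩ and θ-stability as above: if J₁, J₂ ⊆ I both have θ-stable complements, then the cones σ_{J₁} = cone(π_*ε_i : i ∈ J₁) and σ_{J₂} = cone(π_*ε_i : i ∈ J₂) satisfy σ_{J₁} ∩ σ_{J₂} = σ_{J₁ ∩ J₂}. -/
/-- In the exact-sequence setting `0 → A → ℝ^I → N → 0` with
`a(η)_i = ⟨χ_i, η⟩`, let `σ_J := { π(c) | c ≥ 0 supported on J }` for `J ⊆ I`.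
If `J₁` and `J₂` both have `θ`-stable complements, then `σ_{J₁} ∩ σ_{J₂} = σ_{J₁ ∩ J₂}`. -/
theorem cones_intersection
    (A N : Type*) [AddCommGroup A] [Module ℝ A] [AddCommGroup N] [Module ℝ N]
    (I : Type*) [Fintype I] [DecidableEq I]
    (χ : I → (A →ₗ[ℝ] ℝ)) (a : A →ₗ[ℝ] (I → ℝ))
    (ha : ∀ (η : A) (i : I), a η i = χ i η)
    (π : (I → ℝ) →ₗ[ℝ] N) (hπ : Function.Surjective π)
    (hker : LinearMap.ker π = LinearMap.range a)
    (θ : A →ₗ[ℝ] ℝ) (J₁ J₂ : Set I)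
    (h₁ : ∀ η : A, η ≠ 0 → (∀ i ∈ J₁ᶜ, 0 ≤ χ i η) → 0 < θ η)
    (h₂ : ∀ η : A, η ≠ 0 → (∀ i ∈ J₂ᶜ, 0 ≤ χ i η) → 0 < θ η) :
    { x : N | ∃ c : I → ℝ, (∀ i, 0 ≤ c i) ∧ (∀ i ∉ J₁, c i = 0) ∧ x = π c }
        ∩ { x : N | ∃ c : I → ℝ, (∀ i, 0 ≤ c i) ∧ (∀ i ∉ J₂, c i = 0) ∧ x = π c }
      = { x : N | ∃ c : I → ℝ, (∀ i, 0 ≤ c i) ∧ (∀ i ∉ J₁ ∩ J₂, c i = 0) ∧ x = π c } := by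
  ext x
  constructor
  · rintro ⟨⟨c₁, hc₁, hs₁, rfl⟩, ⟨c₂, hc₂, hs₂, heq⟩⟩
    have hmem : c₁ - c₂ ∈ LinearMap.ker π := by
      simp [LinearMap.mem_ker, map_sub, ← heq]
    rw [hker] at hmem
    obtain ⟨η, hη⟩ := hmem
    have hηi : ∀ i, χ i η = c₁ i - c₂ i := fun i => by
      rw [← ha]; rw [hη]; rfl
    have hz : η = 0 := by
      by_contra h0
      have hpos : 0 < θ η := h₂ η h0 (fun i hi => by
        rw [hηi, hs₂ i hi, sub_zero]; exact hc₁ i)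
      have hneg : 0 < θ (-η) := h₁ (-η) (neg_ne_zero.mpr h0) (fun i hi => by
        rw [map_neg, hηi, hs₁ i hi]; simp [hc₂ i])
      rw [map_neg] at hneg; linarith
    have hcc : c₁ = c₂ := by
      have := hη; rw [hz, map_zero] at this
      have : c₁ - c₂ = 0 := this.symm
      exact sub_eq_zero.mp this
    exact ⟨c₁, hc₁, fun i hi => by
      rcases not_and_or.mp hi with h | h
      · exact hs₁ i h
      · rw [hcc]; exact hs₂ i h, rfl⟩
  · rintro ⟨c, hc, hs, rfl⟩
    exact ⟨⟨c, hc, fun i hi => hs i (fun h => hi h.1), rfl⟩,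
           ⟨c, hc, fun i hi => hs i (fun h => hi h.2), rfl⟩⟩
end
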